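/- Let Γ be invertible, Σ, S₁, S₂ symmetric positive semidefinite, Λ₁, Λ₂ compatible matrices, and assume the matrices ΛₖSₖΛₖᵀ are positive semidefinite. For two independent secondary outcomes (cross terms S_{h₁h₂} = 0), the aggregating variance V_agg = Γ⁻¹(Σ − Λ₁S₁Λ₁ᵀ − Λ₂S₂Λ₂ᵀ)(Γᵀ)⁻¹ satisfies V_agg ⪯ V_ave := Γ⁻¹(Σ − (2ω₁−ω₁²)Λ₁S₁Λ₁ᵀ − (2ω₂−ω₂²)Λ₂S₂Λ₂ᵀ)(Γᵀ)⁻¹ in the Loewner order, for any ω₁, ω₂ ≥ 0 with ω₁ + ω₂ = 1. -/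

import Mathlib

/-!
Subtracting the two variances leaves `Γ⁻¹ (c₁ Λ₁S₁Λ₁ᵀ + c₂ Λ₂S₂Λ₂ᵀ) Γ⁻ᵀ` with
`cₖ = 1 - (2ωₖ - ωₖ²) = (1 - ωₖ)² ≥ 0`, a congruence of a positive semidefinite matrix.
-/

open Matrix

namespace Matrix

lemma PosSemidef.mul_sub_mul_conjTranspose {m n R : Type*} [Fintype n] [Finite m] [CommRing R]
    [PartialOrder R] [StarRing R] {A B : Matrix n n R} (hAB : (A - B).PosSemidef)
    (M : Matrix m n R) : (M * A * Mᴴ - M * B * Mᴴ).PosSemidef := by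
  rw [← Matrix.sub_mul, ← Matrix.mul_sub]
  exact hAB.mul_mul_conjTranspose_same M

lemma posSemidef_sub_of_shrunk_reductions {n : Type*} [Fintype n] (Sig : Matrix n n ℝ)
    {P Q : Matrix n n ℝ} (hP : P.PosSemidef) (hQ : Q.PosSemidef) (ω₁ ω₂ : ℝ) :
    ((Sig - (2 * ω₁ - ω₁ ^ 2) • P - (2 * ω₂ - ω₂ ^ 2) • Q) - (Sig - P - Q)).PosSemidef := by
  have hdiff : (Sig - (2 * ω₁ - ω₁ ^ 2) • P - (2 * ω₂ - ω₂ ^ 2) • Q) - (Sig - P - Q)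
      = (1 - ω₁) ^ 2 • P + (1 - ω₂) ^ 2 • Q := by
    module
  rw [hdiff]
  exact (hP.smul (sq_nonneg _)).add (hQ.smul (sq_nonneg _))

end Matrix

theorem stmt_12_general {n q₁ q₂ : ℕ}
    (Γ Sig : Matrix (Fin n) (Fin n) ℝ)
    (Λ₁ : Matrix (Fin n) (Fin q₁) ℝ) (Λ₂ : Matrix (Fin n) (Fin q₂) ℝ)
    (S₁ : Matrix (Fin q₁) (Fin q₁) ℝ) (S₂ : Matrix (Fin q₂) (Fin q₂) ℝ)
    (hΛ₁ : (Λ₁ * S₁ * Λ₁ᵀ).PosSemidef) (hΛ₂ : (Λ₂ * S₂ * Λ₂ᵀ).PosSemidef)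
    (ω₁ ω₂ : ℝ) :
    (Γ⁻¹ * (Sig - (2 * ω₁ - ω₁ ^ 2) • (Λ₁ * S₁ * Λ₁ᵀ)
        - (2 * ω₂ - ω₂ ^ 2) • (Λ₂ * S₂ * Λ₂ᵀ)) * (Γᵀ)⁻¹
      - Γ⁻¹ * (Sig - Λ₁ * S₁ * Λ₁ᵀ - Λ₂ * S₂ * Λ₂ᵀ) * (Γᵀ)⁻¹).PosSemidef := by
  rw [← transpose_nonsing_inv, ← conjTranspose_eq_transpose_of_trivial]
  exact (posSemidef_sub_of_shrunk_reductions Sig hΛ₁ hΛ₂ ω₁ ω₂).mul_sub_mul_conjTranspose Γ⁻¹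

theorem stmt_12 {n q₁ q₂ : ℕ}
    (Γ Sig : Matrix (Fin n) (Fin n) ℝ) (hΓ : IsUnit Γ.det) (hSig : Sig.PosSemidef)
    (Λ₁ : Matrix (Fin n) (Fin q₁) ℝ) (Λ₂ : Matrix (Fin n) (Fin q₂) ℝ)
    (S₁ : Matrix (Fin q₁) (Fin q₁) ℝ) (S₂ : Matrix (Fin q₂) (Fin q₂) ℝ)
    (hS₁ : S₁.PosSemidef) (hS₂ : S₂.PosSemidef)
    (hΛ₁ : (Λ₁ * S₁ * Λ₁ᵀ).PosSemidef) (hΛ₂ : (Λ₂ * S₂ * Λ₂ᵀ).PosSemidef)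
    (ω₁ ω₂ : ℝ) (h1 : 0 ≤ ω₁) (h2 : 0 ≤ ω₂) (hsum : ω₁ + ω₂ = 1) :
    (Γ⁻¹ * (Sig - (2 * ω₁ - ω₁ ^ 2) • (Λ₁ * S₁ * Λ₁ᵀ)
        - (2 * ω₂ - ω₂ ^ 2) • (Λ₂ * S₂ * Λ₂ᵀ)) * (Γᵀ)⁻¹
      - Γ⁻¹ * (Sig - Λ₁ * S₁ * Λ₁ᵀ - Λ₂ * S₂ * Λ₂ᵀ) * (Γᵀ)⁻¹).PosSemidef :=
  stmt_12_general Γ Sig Λ₁ Λ₂ S₁ S₂ hΛ₁ hΛ₂ ω₁ ω₂
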